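/- Let M and M̂ be compact topological manifolds, let p : M̂ → M be a covering map with finite fibers, let f : M → M be a homeomorphism, let k ≥ 1 be an integer, and let g : M̂ → M̂ be a homeomorphism lifting the iterate f^k, i.e. p ∘ g = f^k ∘ p. If every point of M is nonwandering for f (for every x ∈ M and every open neighborhood U of x there exists an integer n ≥ 1 with fⁿ(U) ∩ U ≠ ∅), then every point of M̂ is nonwandering for g. -/

import Mathlib

/-!
If every point is nonwandering for a continuous `φ`, then for every nonempty open `U` and every
`N` some orbit visits `U` at `N + 1` increasing times `T 0 < ⋯ < T N` (apply the case `N - 1` to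
`U ∩ φ⁻ⁿ U`, where `n` is a return time of `U`). With `N = k`, two visit times agree mod `k`,
which gives a return of `U` under `φ^k`.

For a lift `ψ` of `φ` through a covering `p`, take `U = p V` for a small open `V` over which the
fibres have `c` points, and `N = c`. Lifting the visits to points `v i ∈ V` and pushing them by
`ψ^(T N - T i)` lands all of them in the fibre over `φ^(T N) x`, so two coincide; injectivity of
`ψ` then gives `ψ^(T j - T i) (v i) = v j`.
-/

open Set Function Topology

def IsNonwanderingPt {α : Type*} [TopologicalSpace α] (φ : α → α) (x : α) : Prop :=
  ∀ U : Set α, IsOpen U → x ∈ U → ∃ n : ℕ, 1 ≤ n ∧ (φ^[n] '' U ∩ U).Nonempty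

theorem Fin.exists_lt_map_eq_of_ncard_lt {β : Type*} {n : ℕ} {t : Set β} (ht : t.Finite)
    (hn : t.ncard < n) {u : Fin n → β} (hu : ∀ i, u i ∈ t) : ∃ i j, i < j ∧ u i = u j := by
  obtain ⟨i, -, j, -, hij, h⟩ := Set.exists_ne_map_eq_of_ncard_lt_of_maps_to
    (s := univ) (by simpa using hn) (fun i _ ↦ hu i) ht
  rcases hij.lt_or_gt with hij | hij
  · exact ⟨i, j, hij, h⟩
  · exact ⟨j, i, hij, h.symm⟩

theorem IsCoveringMap.eventually_ncard_preimage_singleton {E X : Type*} [TopologicalSpace E]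
    [TopologicalSpace X] {p : E → X} (hp : IsCoveringMap p) (y : E) :
    ∀ᶠ z in 𝓝 (p y), (p ⁻¹' {z}).ncard = (p ⁻¹' {p y}).ncard := by
  have : Nonempty (p ⁻¹' {p y}) := ⟨⟨y, rfl⟩⟩
  let t := (hp (p y)).toTrivialization
  filter_upwards [t.open_baseSet.mem_nhds (hp (p y)).mem_toTrivialization_baseSet] with z hz
  exact Nat.card_congr (t.preimageSingletonHomeomorph hz).toEquiv

section Recurrence

variable {α : Type*} [TopologicalSpace α] {φ : α → α}

theorem exists_strictMono_iterate_mem (hφ : Continuous φ) (h : ∀ x, IsNonwanderingPt φ x)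
    {U : Set α} (hU : IsOpen U) (hne : U.Nonempty) (N : ℕ) :
    ∃ x, ∃ T : Fin (N + 1) → ℕ, StrictMono T ∧ ∀ i, φ^[T i] x ∈ U := by
  induction N generalizing U with
  | zero =>
    obtain ⟨x, hx⟩ := hne
    exact ⟨x, fun _ ↦ 0, fun i j hij ↦ absurd hij (by omega), fun _ ↦ hx⟩
  | succ N ih =>
    obtain ⟨x₀, hx₀⟩ := hne
    obtain ⟨n, hn, -, ⟨u, hu, rfl⟩, hu'⟩ := h x₀ U hU hx₀
    obtain ⟨x, T, hT, hTU⟩ := ih (hU.inter (hU.preimage (hφ.iterate n))) ⟨u, hu, hu'⟩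
    refine ⟨x, Fin.cons (T 0) (fun i ↦ T i + n), ?_, Fin.cases (hTU 0).1 fun i ↦ ?_⟩
    · exact Fin.strictMono_cons.2
        ⟨fun i ↦ lt_add_of_le_of_pos (hT.monotone (Fin.zero_le i)) hn,
          fun i j hij ↦ Nat.add_lt_add_right (hT hij) n⟩
    · simpa [add_comm, iterate_add_apply] using (hTU i).2

theorem IsNonwanderingPt.iterate (hφ : Continuous φ) (h : ∀ x, IsNonwanderingPt φ x) (k : ℕ)
    (x : α) : IsNonwanderingPt φ^[k] x := by
  intro U hU hx
  rcases k.eq_zero_or_pos with rfl | hk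
  · exact ⟨1, le_rfl, by simpa using ⟨x, hx⟩⟩
  obtain ⟨x, T, hT, hTU⟩ := exists_strictMono_iterate_mem hφ h hU ⟨x, hx⟩ k
  obtain ⟨i, j, hij, hmod⟩ := Fin.exists_lt_map_eq_of_ncard_lt (t := Iio k) (finite_Iio k)
    (by simp) (fun i ↦ Nat.mod_lt (T i) hk)
  obtain ⟨m, hm⟩ := (Nat.modEq_iff_dvd' (hT hij).le).1 hmod
  have hTij := hT hij
  refine ⟨m, Nat.one_le_iff_ne_zero.2 (by rintro rfl; omega), φ^[T j] x, ⟨φ^[T i] x, hTU i, ?_⟩,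
    hTU j⟩
  rw [← iterate_mul, ← hm, ← iterate_add_apply, Nat.sub_add_cancel hTij.le]

end Recurrence

theorem IsNonwanderingPt.of_semiconj {E X : Type*} [TopologicalSpace E] [TopologicalSpace X]
    {p : E → X} (hp : IsCoveringMap p) (hfin : ∀ x, (p ⁻¹' {x}).Finite) {φ : X → X}
    {ψ : E → E} (hφ : Continuous φ) (hψ : Injective ψ) (hpψ : Semiconj p ψ φ)
    (h : ∀ x, IsNonwanderingPt φ x) (y : E) : IsNonwanderingPt ψ y := by
  intro V hV hy
  obtain ⟨W, hW, hWo, hyW⟩ := eventually_nhds_iff.1 (hp.eventually_ncard_preimage_singleton y)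
  have hV' : IsOpen (V ∩ p ⁻¹' W) := hV.inter (hWo.preimage hp.continuous)
  obtain ⟨x, T, hT, hTU⟩ := exists_strictMono_iterate_mem hφ h (hp.isOpenMap _ hV')
    ⟨p y, y, ⟨hy, hyW⟩, rfl⟩ (p ⁻¹' {p y}).ncard
  choose v hv hpv using hTU
  set N := T (Fin.last _)
  have hTN : ∀ i, T i ≤ N := fun i ↦ hT.monotone (Fin.le_last i)
  have hfiber : ∀ i, ψ^[N - T i] (v i) ∈ p ⁻¹' {φ^[N] x} := fun i ↦ by
    simp only [mem_preimage, mem_singleton_iff, (hpψ.iterate_right _) _, hpv,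
      ← iterate_add_apply, Nat.sub_add_cancel (hTN i)]
  obtain ⟨i, j, hij, hcoincide⟩ := Fin.exists_lt_map_eq_of_ncard_lt (hfin _)
    (by rw [← hpv (Fin.last _), hW _ (hv _).2]; omega) hfiber
  have hTij := hT hij
  refine ⟨T j - T i, by omega, v j, ⟨v i, (hv i).1, hψ.iterate (N - T j) ?_⟩, (hv j).1⟩
  rwa [← iterate_add_apply, Nat.sub_add_sub_cancel (hTN j) hTij.le]

theorem stmt_4_general {M Mhat : Type*}
    [TopologicalSpace M]
    [TopologicalSpace Mhat]
    (p : Mhat → M) (hp : IsCoveringMap p)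
    (hfin : ∀ x : M, (p ⁻¹' {x}).Finite)
    (f : M ≃ₜ M) (k : ℕ)
    (g : Mhat ≃ₜ Mhat) (hlift : ∀ x : Mhat, p (g x) = (⇑f)^[k] (p x))
    (hNW : ∀ (x : M) (U : Set M), IsOpen U → x ∈ U →
      ∃ n : ℕ, 1 ≤ n ∧ ((⇑f)^[n] '' U ∩ U).Nonempty) :
    ∀ (y : Mhat) (V : Set Mhat), IsOpen V → y ∈ V →
      ∃ n : ℕ, 1 ≤ n ∧ ((⇑g)^[n] '' V ∩ V).Nonempty :=
  IsNonwanderingPt.of_semiconj hp hfin (f.continuous.iterate k) g.injective hlift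
    (IsNonwanderingPt.iterate f.continuous hNW k)

/-- if `g` is a homeomorphism of a compact manifold `Mhat` lifting an
iterate `f^k` of a homeomorphism `f` of a compact manifold `M` through a finite
covering map `p`, and every point of `M` is nonwandering for `f`, then every point
of `Mhat` is nonwandering for `g`. -/
theorem stmt_4 {d d' : ℕ} {M Mhat : Type*}
    [TopologicalSpace M] [T2Space M] [CompactSpace M]
    [ChartedSpace (EuclideanSpace ℝ (Fin d)) M]
    [TopologicalSpace Mhat] [T2Space Mhat] [CompactSpace Mhat]
    [ChartedSpace (EuclideanSpace ℝ (Fin d')) Mhat]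
    (p : Mhat → M) (hp : IsCoveringMap p)
    (hfin : ∀ x : M, (p ⁻¹' {x}).Finite)
    (f : M ≃ₜ M) (k : ℕ) (hk : 1 ≤ k)
    (g : Mhat ≃ₜ Mhat) (hlift : ∀ x : Mhat, p (g x) = (⇑f)^[k] (p x))
    (hNW : ∀ (x : M) (U : Set M), IsOpen U → x ∈ U →
      ∃ n : ℕ, 1 ≤ n ∧ ((⇑f)^[n] '' U ∩ U).Nonempty) :
    ∀ (y : Mhat) (V : Set Mhat), IsOpen V → y ∈ V →
      ∃ n : ℕ, 1 ≤ n ∧ ((⇑g)^[n] '' V ∩ V).Nonempty :=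
  stmt_4_general p hp hfin f k g hlift hNW
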